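/- For each i ∈ [L], let M̃_i be the Metropolis–Hastings chain with symmetric Gaussian proposal q(x,y) = N(y; x, ηI) targeting the mixture density p̃_i(x) ∝ ∑_{j=1}^n w_j p̃_{(i,j)}(x), where p̃_{(i,j)} is the density of N(μ_j, β_i⁻¹Σ), and let M̃_{(i,j)} be the Metropolis–Hastings chain with the same proposal targeting p̃_{(i,j)}. Then for any measurable X⁰ ⊆ ℝ^d and any g_i ∈ L²(ℝ^d, p̃_i), ∑_{j=1}^n w_j Ẽ_{(i,j),X⁰}(g_i,g_i) ≤ Ẽ_{i,X⁰}(g_i,g_i), where Ẽ_{(i,j),X⁰} and Ẽ_{i,X⁰} are the X⁰-restricted Dirichlet forms of M̃_{(i,j)} and M̃_i respectively. -/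

import Mathlib

/-!
The function `min` is positively homogeneous and concave, so
`∑ⱼ wⱼ min (aⱼ, bⱼ) ≤ min (∑ⱼ wⱼ aⱼ, ∑ⱼ wⱼ bⱼ)`: pointwise, the integrand of the Dirichlet form
of the mixture dominates the weighted sum of the integrands of its components, for any symmetric
kernel and any reference measure. The only analytic point is that the mixture integrand is
integrable (otherwise its Bochner integral would be the junk value `0`): it is bounded by
`2 g(x)² π(x) q(x,y) + 2 g(y)² π(y) q(x,y)`, which is integrable because `g ∈ L²(π)` and the
Gaussian proposal has the same finite mass from every starting point.
-/

open MeasureTheory Matrix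

noncomputable section

/-- Quadratic form `v ↦ vᵀ Σ⁻¹ v`. -/
def quadForm {d : ℕ} (Sig : Matrix (Fin d) (Fin d) ℝ) (v : Fin d → ℝ) : ℝ :=
  v ⬝ᵥ (Sig⁻¹ *ᵥ v)

/-- Density of the Gaussian distribution `N(μ, β⁻¹ Σ)` on `ℝ^d`. -/
def gaussDens {d : ℕ} (Sig : Matrix (Fin d) (Fin d) ℝ) (β : ℝ) (μ x : Fin d → ℝ) : ℝ :=
  (β / (2 * Real.pi)) ^ ((d : ℝ) / 2) / Real.sqrt Sig.det *
    Real.exp (-(β / 2) * quadForm Sig (x - μ))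

/-- Density of the symmetric Gaussian proposal `N(y; x, ηI)`. -/
def propDens (d : ℕ) (η : ℝ) (x y : Fin d → ℝ) : ℝ :=
  (2 * Real.pi * η) ^ (-(d : ℝ) / 2) * Real.exp (-(∑ k, (y k - x k) ^ 2) / (2 * η))

/-- `X⁰`-restricted Dirichlet form of the Metropolis–Hastings chain with symmetric
proposal `q` and target density `π`. -/
def mhRestDirichlet {d : ℕ} (η : ℝ) (π : (Fin d → ℝ) → ℝ) (X0 : Set (Fin d → ℝ))
    (g : (Fin d → ℝ) → ℝ) : ℝ :=
  (1 / 2) * ∫ x in X0, ∫ y in X0, (g x - g y) ^ 2 * propDens d η x y * min (π x) (π y)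

open scoped ENNReal

theorem Finset.sum_mul_min_le_min_sum {ι : Type*} (s : Finset ι) {w a b : ι → ℝ}
    (hw : ∀ j ∈ s, 0 ≤ w j) :
    ∑ j ∈ s, w j * min (a j) (b j) ≤ min (∑ j ∈ s, w j * a j) (∑ j ∈ s, w j * b j) :=
  le_min (Finset.sum_le_sum fun j hj => mul_le_mul_of_nonneg_left (min_le_left _ _) (hw j hj))
    (Finset.sum_le_sum fun j hj => mul_le_mul_of_nonneg_left (min_le_right _ _) (hw j hj))

section Fubini

variable {α β : Type*} [MeasurableSpace α] [MeasurableSpace β] {μ : Measure α} {ν : Measure β}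

theorem sum_integral_integral_le_of_sum_le [SFinite μ] [SFinite ν] {ι : Type*} [Fintype ι]
    {f : ι → α × β → ℝ} {F : α × β → ℝ} (hF : Integrable F (μ.prod ν))
    (hf : ∀ j, AEStronglyMeasurable (f j) (μ.prod ν)) (hf0 : ∀ j z, 0 ≤ f j z)
    (hle : ∀ z, ∑ j, f j z ≤ F z) :
    ∑ j, ∫ x, ∫ y, f j (x, y) ∂ν ∂μ ≤ ∫ x, ∫ y, F (x, y) ∂ν ∂μ := by
  have hfF : ∀ j z, f j z ≤ F z := fun j z =>
    (Finset.single_le_sum (fun k _ => hf0 k z) (Finset.mem_univ j)).trans (hle z)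
  have hfi : ∀ j, Integrable (f j) (μ.prod ν) := fun j =>
    hF.mono' (hf j) (ae_of_all _ fun z => by rw [Real.norm_of_nonneg (hf0 j z)]; exact hfF j z)
  simp only [← integral_prod _ (hfi _), ← integral_prod _ hF]
  rw [← integral_finsetSum _ fun j _ => hfi j]
  exact integral_mono (integrable_finsetSum _ fun j _ => hfi j) hF hle

theorem integrable_mul_kernel_prod [SFinite ν] {f : α → ℝ} (hf : Integrable f μ)
    {q : α → β → ℝ} (hq : Measurable (Function.uncurry q)) {J : ℝ≥0∞} (hJ : J ≠ ∞)
    (hqJ : ∀ x, ∫⁻ y, ‖q x y‖ₑ ∂ν ≤ J) :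
    Integrable (fun z : α × β => f z.1 * q z.1 z.2) (μ.prod ν) := by
  refine ⟨hf.1.comp_fst.mul hq.aestronglyMeasurable, ?_⟩
  calc ∫⁻ z, ‖f z.1 * q z.1 z.2‖ₑ ∂μ.prod ν
      = ∫⁻ x, ∫⁻ y, ‖f x‖ₑ * ‖q x y‖ₑ ∂ν ∂μ := by
        simp only [enorm_mul]
        exact lintegral_prod _ (hf.1.comp_fst.enorm.mul hq.enorm.aemeasurable)
    _ = ∫⁻ x, ‖f x‖ₑ * ∫⁻ y, ‖q x y‖ₑ ∂ν ∂μ := by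
        simp only [lintegral_const_mul' _ _ enorm_ne_top]
    _ ≤ ∫⁻ x, ‖f x‖ₑ * J ∂μ := by gcongr with x; exact hqJ x
    _ = (∫⁻ x, ‖f x‖ₑ ∂μ) * J := lintegral_mul_const' _ _ hJ
    _ < ∞ := ENNReal.mul_lt_top hf.2 hJ.lt_top

end Fubini

section DirichletForm

variable {α : Type*}

def dirichletIntegrand (q : α → α → ℝ) (π g : α → ℝ) (z : α × α) : ℝ :=
  (g z.1 - g z.2) ^ 2 * q z.1 z.2 * min (π z.1) (π z.2)

theorem dirichletIntegrand_nonneg {q : α → α → ℝ} {π : α → ℝ} (g : α → ℝ) {x y : α}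
    (hq : 0 ≤ q x y) (hπx : 0 ≤ π x) (hπy : 0 ≤ π y) : 0 ≤ dirichletIntegrand q π g (x, y) := by
  have := le_min hπx hπy
  unfold dirichletIntegrand
  positivity

theorem dirichletIntegrand_le {q : α → α → ℝ} {π : α → ℝ} (g : α → ℝ) {x y : α}
    (hq : 0 ≤ q x y) (hπx : 0 ≤ π x) (hπy : 0 ≤ π y) :
    dirichletIntegrand q π g (x, y)
      ≤ 2 * (g x ^ 2 * π x * q x y) + 2 * (g y ^ 2 * π y * q x y) := by
  have hm : 0 ≤ min (π x) (π y) := le_min hπx hπy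
  have hsq : (g x - g y) ^ 2 ≤ 2 * g x ^ 2 + 2 * g y ^ 2 := by nlinarith [sq_nonneg (g x + g y)]
  calc dirichletIntegrand q π g (x, y)
      ≤ (2 * g x ^ 2 + 2 * g y ^ 2) * q x y * min (π x) (π y) := by
        unfold dirichletIntegrand; gcongr
    _ = 2 * (g x ^ 2 * min (π x) (π y) * q x y) + 2 * (g y ^ 2 * min (π x) (π y) * q x y) := by
        ring
    _ ≤ _ := by gcongr; exacts [min_le_left _ _, min_le_right _ _]

theorem sum_mul_dirichletIntegrand_le {ι : Type*} [Fintype ι] {w : ι → ℝ} (hw : ∀ j, 0 ≤ w j)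
    (q : α → α → ℝ) (p : ι → α → ℝ) (g : α → ℝ) {z : α × α} (hq : 0 ≤ q z.1 z.2) :
    ∑ j, w j * dirichletIntegrand q (p j) g z
      ≤ dirichletIntegrand q (fun x => ∑ j, w j * p j x) g z := by
  have hc : 0 ≤ (g z.1 - g z.2) ^ 2 * q z.1 z.2 := by positivity
  calc ∑ j, w j * dirichletIntegrand q (p j) g z
      = (g z.1 - g z.2) ^ 2 * q z.1 z.2 * ∑ j, w j * min (p j z.1) (p j z.2) := by
        rw [Finset.mul_sum]
        exact Finset.sum_congr rfl fun j _ => by unfold dirichletIntegrand; ring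
    _ ≤ dirichletIntegrand q (fun x => ∑ j, w j * p j x) g z :=
        mul_le_mul_of_nonneg_left (Finset.sum_mul_min_le_min_sum _ fun j _ => hw j) hc

variable [MeasurableSpace α]

/-- With `ν = volume.restrict X0` and `q = propDens d η` this is, definitionally,
`mhRestDirichlet η π X0 g`. -/
def dirichletForm (ν : Measure α) (q : α → α → ℝ) (π g : α → ℝ) : ℝ :=
  (1 / 2) * ∫ x, ∫ y, dirichletIntegrand q π g (x, y) ∂ν ∂ν

variable {ν : Measure α} {q : α → α → ℝ}

theorem aestronglyMeasurable_dirichletIntegrand {π g : α → ℝ} (hπ : AEStronglyMeasurable π ν)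
    (hg : AEStronglyMeasurable g ν) (hq : Measurable (Function.uncurry q)) :
    AEStronglyMeasurable (dirichletIntegrand q π g) (ν.prod ν) :=
  (((hg.comp_fst.sub hg.comp_snd).pow 2).mul hq.aestronglyMeasurable).mul
    (hπ.comp_fst.inf hπ.comp_snd)

variable [SFinite ν] {J : ℝ≥0∞}

theorem integrable_dirichletIntegrand {π g : α → ℝ} (hπ : AEStronglyMeasurable π ν)
    (hπ0 : ∀ x, 0 ≤ π x) (hg : AEStronglyMeasurable g ν)
    (hgπ : Integrable (fun x => g x ^ 2 * π x) ν) (hq : Measurable (Function.uncurry q))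
    (hq0 : ∀ x y, 0 ≤ q x y) (hqs : ∀ x y, q x y = q y x) (hJ : J ≠ ∞)
    (hqJ : ∀ x, ∫⁻ y, ‖q x y‖ₑ ∂ν ≤ J) :
    Integrable (dirichletIntegrand q π g) (ν.prod ν) := by
  have hfst := integrable_mul_kernel_prod hgπ hq hJ hqJ
  have hsnd : Integrable (fun z : α × α => g z.2 ^ 2 * π z.2 * q z.1 z.2) (ν.prod ν) := by
    simpa only [Function.comp_def, Prod.fst_swap, Prod.snd_swap, hqs _ _] using hfst.swap
  refine ((hfst.const_mul 2).add (hsnd.const_mul 2)).mono'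
    (aestronglyMeasurable_dirichletIntegrand hπ hg hq) (ae_of_all _ fun z => ?_)
  rw [Real.norm_of_nonneg (dirichletIntegrand_nonneg g (hq0 z.1 z.2) (hπ0 z.1) (hπ0 z.2))]
  exact dirichletIntegrand_le g (hq0 z.1 z.2) (hπ0 z.1) (hπ0 z.2)

theorem sum_mul_dirichletForm_le {ι : Type*} [Fintype ι] {w : ι → ℝ} (hw : ∀ j, 0 ≤ w j)
    {p : ι → α → ℝ} (hp : ∀ j, AEStronglyMeasurable (p j) ν) (hp0 : ∀ j x, 0 ≤ p j x)
    {g : α → ℝ} (hg : AEStronglyMeasurable g ν)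
    (hgπ : Integrable (fun x => g x ^ 2 * ∑ j, w j * p j x) ν)
    (hq : Measurable (Function.uncurry q)) (hq0 : ∀ x y, 0 ≤ q x y)
    (hqs : ∀ x y, q x y = q y x) (hJ : J ≠ ∞) (hqJ : ∀ x, ∫⁻ y, ‖q x y‖ₑ ∂ν ≤ J) :
    ∑ j, w j * dirichletForm ν q (p j) g ≤ dirichletForm ν q (fun x => ∑ j, w j * p j x) g := by
  have hπ0 : ∀ x, 0 ≤ ∑ j, w j * p j x := fun x =>
    Finset.sum_nonneg fun j _ => mul_nonneg (hw j) (hp0 j x)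
  have hπ : AEStronglyMeasurable (fun x => ∑ j, w j * p j x) ν :=
    Finset.aestronglyMeasurable_fun_sum _ fun j _ => (hp j).const_mul _
  have hF := integrable_dirichletIntegrand hπ hπ0 hg hgπ hq hq0 hqs hJ hqJ
  calc ∑ j, w j * dirichletForm ν q (p j) g
      = 1 / 2 * ∑ j, ∫ x, ∫ y, w j * dirichletIntegrand q (p j) g (x, y) ∂ν ∂ν := by
        rw [Finset.mul_sum]
        refine Finset.sum_congr rfl fun j _ => ?_
        simp only [dirichletForm, integral_const_mul]
        ring
    _ ≤ 1 / 2 * ∫ x, ∫ y, dirichletIntegrand q (fun x => ∑ j, w j * p j x) g (x, y) ∂ν ∂ν := by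
        gcongr
        exact sum_integral_integral_le_of_sum_le hF
          (fun j => (aestronglyMeasurable_dirichletIntegrand (hp j) hg hq).const_mul _)
          (fun j z => mul_nonneg (hw j) (dirichletIntegrand_nonneg g (hq0 _ _) (hp0 j _) (hp0 j _)))
          fun z => sum_mul_dirichletIntegrand_le hw q p g (hq0 z.1 z.2)
    _ = dirichletForm ν q (fun x => ∑ j, w j * p j x) g := rfl

end DirichletForm

section Gaussian

variable {d : ℕ}

theorem propDens_nonneg {η : ℝ} (hη : 0 ≤ η) (x y : Fin d → ℝ) : 0 ≤ propDens d η x y := by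
  unfold propDens
  positivity

theorem propDens_comm (η : ℝ) (x y : Fin d → ℝ) : propDens d η x y = propDens d η y x := by
  simp only [propDens, ← neg_sub (x _) (y _), neg_sq]

theorem propDens_eq_zero_sub (η : ℝ) (x y : Fin d → ℝ) :
    propDens d η x y = propDens d η 0 (y - x) := by
  simp [propDens]

theorem measurable_uncurry_propDens (η : ℝ) :
    Measurable (Function.uncurry (propDens d η)) := by
  unfold Function.uncurry propDens
  fun_prop

theorem integrable_propDens_zero {η : ℝ} (hη : 0 < η) : Integrable (propDens d η 0) := by
  have hprod : propDens d η 0 = fun y => (2 * Real.pi * η) ^ (-(d : ℝ) / 2) *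
      ∏ k, Real.exp (-(1 / (2 * η)) * y k ^ 2) := by
    ext y
    simp only [propDens, Pi.zero_apply, sub_zero, ← Real.exp_sum, ← Finset.mul_sum]
    ring_nf
  rw [hprod]
  exact (Integrable.fintype_prod fun _ => integrable_exp_neg_mul_sq (by positivity)).const_mul _

theorem lintegral_propDens_le {η : ℝ} (X0 : Set (Fin d → ℝ)) (x : Fin d → ℝ) :
    ∫⁻ y in X0, ‖propDens d η x y‖ₑ ≤ ∫⁻ y, ‖propDens d η 0 y‖ₑ := by
  calc ∫⁻ y in X0, ‖propDens d η x y‖ₑ ≤ ∫⁻ y, ‖propDens d η x y‖ₑ :=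
        setLIntegral_le_lintegral _ _
    _ = ∫⁻ y, ‖propDens d η 0 y‖ₑ := by
        simp only [propDens_eq_zero_sub η x]
        exact lintegral_sub_right_eq_self (fun y => ‖propDens d η 0 y‖ₑ) x

theorem measurable_gaussDens (Sig : Matrix (Fin d) (Fin d) ℝ) (β : ℝ) (μ : Fin d → ℝ) :
    Measurable (gaussDens Sig β μ) := by
  unfold gaussDens quadForm
  fun_prop

theorem gaussDens_pos {Sig : Matrix (Fin d) (Fin d) ℝ} (hSig : Sig.PosDef) {β : ℝ} (hβ : 0 < β)
    (μ x : Fin d → ℝ) : 0 < gaussDens Sig β μ x := by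
  have := Real.sqrt_pos.mpr hSig.det_pos
  unfold gaussDens
  positivity

end Gaussian

theorem aestronglyMeasurable_and_integrable_sq_mul_of_memLp_withDensity {α : Type*}
    [MeasurableSpace α] {μ : Measure α} {π : α → ℝ} (hπ : Measurable π) (hπ0 : ∀ x, 0 < π x)
    {g : α → ℝ} (hg : MemLp g 2 (μ.withDensity fun x => ENNReal.ofReal (π x))) :
    AEStronglyMeasurable g μ ∧ Integrable (fun x => g x ^ 2 * π x) μ := by
  constructor
  · refine hg.1.mono_ac (withDensity_absolutelyContinuous' (by fun_prop) (ae_of_all _ fun x => ?_))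
    exact (ENNReal.ofReal_pos.mpr (hπ0 x)).ne'
  · have h := (integrable_withDensity_iff_integrable_smul' (by fun_prop)
      (ae_of_all _ fun x => ENNReal.ofReal_lt_top)).mp hg.integrable_sq
    simpa only [ENNReal.toReal_ofReal (hπ0 _).le, smul_eq_mul, mul_comm (π _)] using h

theorem stmt10_general (d L n : ℕ) (hn : 0 < n)
    (μ : Fin n → Fin d → ℝ)
    (Sig : Matrix (Fin d) (Fin d) ℝ) (hSig : Sig.PosDef)
    (w : Fin n → ℝ) (hw : ∀ j, 0 < w j)
    (β : Fin L → ℝ) (hβ : ∀ i, 0 < β i ∧ β i ≤ 1)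
    (η : ℝ) (hη : 0 < η)
    (ptilde : Fin L → (Fin d → ℝ) → ℝ)
    (hptilde : ∀ i x, ptilde i x = ∑ j, w j * gaussDens Sig (β i) (μ j) x)
    (X0 : Set (Fin d → ℝ)) :
    ∀ (i : Fin L) (g : (Fin d → ℝ) → ℝ),
      MemLp g 2 (volume.withDensity fun x => ENNReal.ofReal (ptilde i x)) →
      ∑ j, w j * mhRestDirichlet η (gaussDens Sig (β i) (μ j)) X0 g
        ≤ mhRestDirichlet η (ptilde i) X0 g := by
  intro i g hg
  have hdens_pos := fun j => gaussDens_pos hSig (hβ i).1 (μ j)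
  rw [show ptilde i = fun x => ∑ j, w j * gaussDens Sig (β i) (μ j) x from funext (hptilde i)]
    at hg ⊢
  obtain ⟨hg_meas, hg_int⟩ := aestronglyMeasurable_and_integrable_sq_mul_of_memLp_withDensity
    (Finset.measurable_fun_sum _ fun j _ => (measurable_gaussDens Sig (β i) (μ j)).const_mul _)
    (fun x => Finset.sum_pos (fun j _ => mul_pos (hw j) (hdens_pos j x))
      ⟨⟨0, hn⟩, Finset.mem_univ _⟩)
    hg
  exact sum_mul_dirichletForm_le (fun j => (hw j).le)
    (fun j => (measurable_gaussDens Sig (β i) (μ j)).aestronglyMeasurable)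
    (fun j x => (hdens_pos j x).le)
    hg_meas.restrict hg_int.restrict (measurable_uncurry_propDens η) (propDens_nonneg hη.le)
    (propDens_comm η) (integrable_propDens_zero hη).hasFiniteIntegral.ne (lintegral_propDens_le X0)

theorem stmt10 (d L n : ℕ) (hn : 0 < n) (hL : 0 < L)
    (μ : Fin n → Fin d → ℝ)
    (Sig : Matrix (Fin d) (Fin d) ℝ) (hSig : Sig.PosDef)
    (w : Fin n → ℝ) (hw : ∀ j, 0 < w j) (hw1 : ∑ j, w j = 1)
    (β : Fin L → ℝ) (hβ : ∀ i, 0 < β i ∧ β i ≤ 1)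
    (η : ℝ) (hη : 0 < η)
    (ptilde : Fin L → (Fin d → ℝ) → ℝ)
    (hptilde : ∀ i x, ptilde i x = ∑ j, w j * gaussDens Sig (β i) (μ j) x)
    (X0 : Set (Fin d → ℝ)) (hX0 : MeasurableSet X0) :
    ∀ (i : Fin L) (g : (Fin d → ℝ) → ℝ),
      MemLp g 2 (volume.withDensity fun x => ENNReal.ofReal (ptilde i x)) →
      ∑ j, w j * mhRestDirichlet η (gaussDens Sig (β i) (μ j)) X0 g
        ≤ mhRestDirichlet η (ptilde i) X0 g :=
  stmt10_general d L n hn μ Sig hSig w hw β hβ η hη ptilde hptilde X0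

end
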